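/- Let ψ(θ) = (1/√2)·(cos(θ/2), sin(θ/2), −sin(θ/2), cos(θ/2)) ∈ ℂ⁴, let H = diag(0,1,1,2), and let X(θ) be the random variable taking value H_{j,j} with probability |ψ(θ)_j|² for j ∈ {0,1,2,3} (so X(θ) = 0 with probability cos²(θ/2)/2, X(θ) = 1 with probability sin²(θ/2), and X(θ) = 2 with probability cos²(θ/2)/2). Then for every θ ∈ ℝ, CVaR_{1/2}(X(θ)) = sin²(θ/2). -/

import Mathlib

/-!
By `sin² + cos² = 1`, `X(θ)` takes the values `0, 1, 2` with probabilities `(1 - s)/2, s, (1 - s)/2`,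
where `s = sin²(θ/2)`. If `s > 0` the lower `1/2`-quantile is `1`, only the atom at `0` lies below
it, and `CVaR_{1/2} = 2 · (1/2 - (1 - s)/2) = s`. If `s = 0` the quantile is `0`, nothing lies
below it, and `CVaR_{1/2} = 0 = s`.
-/

open scoped Classical

/-- The lower `α`-quantile `q_α = inf { x : P(X ≤ x) ≥ α }` of a random variable `X` on a
finite probability space with probability mass function `p`. -/
noncomputable def lowerQuantile {Ω : Type*} [Fintype Ω] (p : Ω → ℝ) (X : Ω → ℝ) (α : ℝ) : ℝ :=
  sInf {x : ℝ | α ≤ ∑ ω ∈ Finset.univ.filter (fun ω => X ω ≤ x), p ω}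

/-- The Conditional Value-at-Risk
`CVaR_α(X) = (1/α)·( E[X·1_{X < q_α}] + q_α·(α − P(X < q_α)) )`
of a random variable `X` on a finite probability space with probability mass function `p`. -/
noncomputable def cvar {Ω : Type*} [Fintype Ω] (p : Ω → ℝ) (X : Ω → ℝ) (α : ℝ) : ℝ :=
  (1 / α) *
    ((∑ ω ∈ Finset.univ.filter (fun ω => X ω < lowerQuantile p X α), p ω * X ω) +
      lowerQuantile p X α *
        (α - ∑ ω ∈ Finset.univ.filter (fun ω => X ω < lowerQuantile p X α), p ω))

/-- `ψ(θ) = (1/√2)·(cos(θ/2), sin(θ/2), −sin(θ/2), cos(θ/2)) ∈ ℂ⁴`. -/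
noncomputable def psi (θ : ℝ) : Fin 4 → ℂ :=
  ![((Real.cos (θ / 2) / Real.sqrt 2 : ℝ) : ℂ),
    ((Real.sin (θ / 2) / Real.sqrt 2 : ℝ) : ℂ),
    ((-(Real.sin (θ / 2)) / Real.sqrt 2 : ℝ) : ℂ),
    ((Real.cos (θ / 2) / Real.sqrt 2 : ℝ) : ℂ)]

open Finset

theorem lowerQuantile_eq_of_le_of_forall_lt {Ω : Type*} [Fintype Ω] {p X : Ω → ℝ} {α q : ℝ}
    (hq : α ≤ ∑ ω ∈ univ.filter (fun ω => X ω ≤ q), p ω)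
    (hlt : ∀ x < q, ∑ ω ∈ univ.filter (fun ω => X ω ≤ x), p ω < α) :
    lowerQuantile p X α = q :=
  IsLeast.csInf_eq ⟨hq, fun x hx => not_lt.mp fun hxq => (hlt x hxq).not_ge hx⟩

theorem norm_psi_sq (θ : ℝ) :
    (fun j : Fin 4 => ‖psi θ j‖ ^ 2) =
      ![(1 - Real.sin (θ / 2) ^ 2) / 2, Real.sin (θ / 2) ^ 2 / 2, Real.sin (θ / 2) ^ 2 / 2,
        (1 - Real.sin (θ / 2) ^ 2) / 2] := by
  have norm_div_sqrt_two_sq (r : ℝ) : ‖((r / Real.sqrt 2 : ℝ) : ℂ)‖ ^ 2 = r ^ 2 / 2 := by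
    rw [Complex.norm_real, Real.norm_eq_abs, sq_abs, div_pow, Real.sq_sqrt zero_le_two]
  funext j
  fin_cases j <;> dsimp [psi] <;> rw [norm_div_sqrt_two_sq] <;> simp [Real.cos_sq']

section Law

variable {s : ℝ}

theorem sum_filter_le_law (x : ℝ) :
    ∑ ω ∈ univ.filter (fun ω => (![0, 1, 1, 2] : Fin 4 → ℝ) ω ≤ x),
        (![(1 - s) / 2, s / 2, s / 2, (1 - s) / 2] : Fin 4 → ℝ) ω =
      (if 0 ≤ x then (1 - s) / 2 else 0) + (if 1 ≤ x then s else 0) +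
        (if 2 ≤ x then (1 - s) / 2 else 0) := by
  rw [sum_filter, Fin.sum_univ_four]
  by_cases h0 : (0 : ℝ) ≤ x <;> by_cases h1 : (1 : ℝ) ≤ x <;> by_cases h2 : (2 : ℝ) ≤ x <;>
    simp [h0, h1, h2] <;> ring

theorem lowerQuantile_law_half_of_pos (hs : 0 < s) :
    lowerQuantile ![(1 - s) / 2, s / 2, s / 2, (1 - s) / 2] ![0, 1, 1, 2] (1 / 2) = 1 := by
  apply lowerQuantile_eq_of_le_of_forall_lt
  · rw [sum_filter_le_law, if_pos zero_le_one, if_pos le_rfl, if_neg (by norm_num)]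
    linarith
  · intro x hx
    rw [sum_filter_le_law, if_neg (show ¬(1 : ℝ) ≤ x by linarith),
      if_neg (show ¬(2 : ℝ) ≤ x by linarith)]
    split_ifs <;> linarith

theorem lowerQuantile_law_half_of_nonpos (hs : s ≤ 0) :
    lowerQuantile ![(1 - s) / 2, s / 2, s / 2, (1 - s) / 2] ![0, 1, 1, 2] (1 / 2) = 0 := by
  apply lowerQuantile_eq_of_le_of_forall_lt
  · rw [sum_filter_le_law, if_pos le_rfl, if_neg (by norm_num), if_neg (by norm_num)]
    linarith
  · intro x hx
    rw [sum_filter_le_law, if_neg (by linarith), if_neg (by linarith), if_neg (by linarith)]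
    norm_num

theorem cvar_law_half (hs : 0 ≤ s) :
    cvar ![(1 - s) / 2, s / 2, s / 2, (1 - s) / 2] ![0, 1, 1, 2] (1 / 2) = s := by
  rcases hs.eq_or_lt with rfl | hs
  · rw [cvar, lowerQuantile_law_half_of_nonpos le_rfl]
    simp [sum_filter, Fin.sum_univ_four]
  · rw [cvar, lowerQuantile_law_half_of_pos hs]
    simp [sum_filter, Fin.sum_univ_four, mul_sub, mul_div_cancel₀]

end Law

/-- For `H = diag(0,1,1,2)` and the random variable `X(θ)` taking value `H_{j,j}` with
probability `|ψ(θ)_j|²`, one has `CVaR_{1/2}(X(θ)) = sin²(θ/2)` for every `θ`. -/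
theorem cvar_half_eq_sin_sq (θ : ℝ) :
    cvar (fun j : Fin 4 => ‖psi θ j‖ ^ 2)
      (fun j : Fin 4 => (![0, 1, 1, 2] : Fin 4 → ℝ) j) (1 / 2) =
      Real.sin (θ / 2) ^ 2 := by
  rw [norm_psi_sq]
  exact cvar_law_half (sq_nonneg _)
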